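/- Let p be a prime with p ≡ 1 (mod 4), let e be a positive integer, and set n = p^e. Then the p-adic valuation of the discriminant of F_n(x) equals e − e(n−1). -/

import Mathlib

open Polynomial BigOperators

/-- `F n` is the truncated logarithmic polynomial `1 + x + x²/2 + ⋯ + xⁿ/n ∈ ℚ[x]`. -/
noncomputable def F (n : ℕ) : Polynomial ℚ :=
  1 + ∑ k ∈ Finset.Icc 1 n, Polynomial.C ((k : ℚ)⁻¹) * Polynomial.X ^ k

/-- `Ln n = lcm {1, 2, …, n}`. -/
def Ln (n : ℕ) : ℕ := (Finset.Icc 1 n).lcm id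

/-- `Ftilde n = Ln n • F n`, a polynomial with integer coefficients. -/
noncomputable def Ftilde (n : ℕ) : Polynomial ℚ := Polynomial.C ((Ln n : ℚ)) * F n

/-- The resultant `Res(P, Q)` of two polynomials over `ℚ`, computed in `ℂ` via the
product formula `Res(P,Q) = lc(P)^(deg Q) * ∏_{P(r)=0} Q(r)` (roots with multiplicity). -/
noncomputable def resC (P Q : Polynomial ℚ) : ℂ :=
  ((P.leadingCoeff : ℂ)) ^ Q.natDegree *
    ((P.map (algebraMap ℚ ℂ)).roots.map (fun r => (Q.map (algebraMap ℚ ℂ)).eval r)).prod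

/-- The discriminant `disc P = (−1)^(n(n−1)/2) ⬝ a_n⁻¹ ⬝ Res(P, P′)`, as a complex number. -/
noncomputable def discC (P : Polynomial ℚ) : ℂ :=
  (-1) ^ (P.natDegree.choose 2) * ((P.leadingCoeff : ℂ))⁻¹ * resC P (Polynomial.derivative P)

/-- `𝒫 n = ∏_θ F̃_n(θ)`, the product over the nontrivial `n`-th roots of unity in `ℂ`. -/
noncomputable def P (n : ℕ) : ℂ :=
  ∏ θ ∈ (Polynomial.nthRootsFinset n (1 : ℂ)).erase 1, (Polynomial.aeval θ) (Ftilde n)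

/-- `Xc m ω = ∏_{k=1}^{m−1} (1/m + ω^k + ω^{2k}/2 + ⋯ + ω^{(m−1)k}/(m−1))`. -/
noncomputable def Xc (m : ℕ) (ω : ℂ) : ℂ :=
  ∏ k ∈ Finset.Icc 1 (m - 1), ((m : ℂ)⁻¹ + ∑ j ∈ Finset.Icc 1 (m - 1), ω ^ (j * k) / (j : ℂ))

/-- `Y m = 1 + 1/2 + ⋯ + 1/m ∈ ℚ`. -/
def Y (m : ℕ) : ℚ := ∑ j ∈ Finset.Icc 1 m, (j : ℚ)⁻¹


/-!
The derivative of `F n` is `1 + x + ⋯ + x^(n-1)` and its leading coefficient is `1/n`, so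
`disc F_n = ± n · Res(F_n', F_n) = ± n · L^(-(n-1)) · Res(F_n', L · F_n)` with `L = lcm(1, …, n)`.
Since `L · F_n` has integer coefficients, the last resultant is an integer, and it can be reduced
mod `p`. For `n = p^e` we have `1 + x + ⋯ + x^(n-1) ≡ (x - 1)^(n-1) (mod p)`, so the resultant is
`≡ (L · F_n(1))^(n-1)`. Moreover `v_p(L) = e`, and `L / k` is divisible by `p` for `k < n` but not
for `k = n`, so `p ∤ L + Σ L / k = L · F_n(1)`. Hence `v_p(disc F_n) = e - e(n-1)`.
-/

theorem Nat.factorization_finset_lcm {ι : Type*} {s : Finset ι} {f : ι → ℕ}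
    (hf : ∀ i ∈ s, f i ≠ 0) (p : ℕ) :
    (s.lcm f).factorization p = s.sup fun i => (f i).factorization p := by
  classical
  induction s using Finset.induction_on with
  | empty => simp
  | insert a s ha ih =>
    have hs : s.lcm f ≠ 0 := Finset.lcm_eq_zero_iff.not.mpr
      fun ⟨i, hi, h0⟩ => hf i (Finset.mem_insert_of_mem hi) h0
    rw [Finset.lcm_insert, Finset.sup_insert, ← ih fun i hi => hf i (Finset.mem_insert_of_mem hi)]
    exact congrArg (· p) (Nat.factorization_lcm (hf a (Finset.mem_insert_self a s)) hs)

lemma dvd_Ln {k n : ℕ} (hk : 1 ≤ k) (hkn : k ≤ n) : k ∣ Ln n :=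
  Finset.dvd_lcm (Finset.mem_Icc.mpr ⟨hk, hkn⟩)

lemma Ln_ne_zero (n : ℕ) : Ln n ≠ 0 :=
  Finset.lcm_eq_zero_iff.not.mpr fun ⟨k, hk, h0⟩ => by simp_all

lemma factorization_Ln_prime_pow {p : ℕ} (hp : p.Prime) (e : ℕ) :
    (Ln (p ^ e)).factorization p = e := by
  have hpe : 1 ≤ p ^ e := Nat.one_le_pow _ _ hp.pos
  rw [Ln, Nat.factorization_finset_lcm fun k hk => by simp at hk; simp; omega]
  refine le_antisymm (Finset.sup_le fun k hk => ?_) ?_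
  · exact Nat.factorization_le_of_le_pow (Finset.mem_Icc.mp hk).2
  · calc e = (p ^ e).factorization p := by simp [hp.factorization_pow]
      _ ≤ _ := Finset.le_sup (f := fun k => (id k).factorization p)
        (Finset.mem_Icc.mpr ⟨hpe, le_rfl⟩)

lemma prime_dvd_Ln_div {p e k : ℕ} (hp : p.Prime) (hk : 1 ≤ k) (hke : k < p ^ e) :
    p ∣ Ln (p ^ e) / k := by
  have hk0 : k ≠ 0 := by omega
  have hlt : k.factorization p < e := by
    by_contra! h
    exact absurd (Nat.le_of_dvd (by omega) ((hp.pow_dvd_iff_le_factorization hk0).mpr h)) (by omega)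
  apply Nat.dvd_of_factorization_pos
  rw [Nat.factorization_div (dvd_Ln hk hke.le), Finsupp.tsub_apply, factorization_Ln_prime_pow hp]
  omega

lemma not_prime_dvd_Ln_div_self {p : ℕ} (hp : p.Prime) (e : ℕ) : ¬ p ∣ Ln (p ^ e) / p ^ e := by
  intro h
  have hpe : p ^ e ∣ Ln (p ^ e) := dvd_Ln (Nat.one_le_pow _ _ hp.pos) le_rfl
  have hquot : Ln (p ^ e) / p ^ e ≠ 0 :=
    (Nat.div_pos (Nat.le_of_dvd (Nat.pos_of_ne_zero (Ln_ne_zero _)) hpe) (pow_pos hp.pos e)).ne'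
  have := hp.factorization_pos_of_dvd hquot h
  rw [Nat.factorization_div hpe, Finsupp.tsub_apply, factorization_Ln_prime_pow hp,
    hp.factorization_pow] at this
  simp at this

lemma not_prime_dvd_Ln_add_sum_div {p e : ℕ} (hp : p.Prime) (he : 0 < e) :
    ¬ p ∣ Ln (p ^ e) + ∑ k ∈ Finset.Icc 1 (p ^ e), Ln (p ^ e) / k := by
  have hpe : 1 ≤ p ^ e := Nat.one_le_pow _ _ hp.pos
  have hLn : p ∣ Ln (p ^ e) := (dvd_pow_self p he.ne').trans (dvd_Ln hpe le_rfl)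
  have hlower : p ∣ ∑ k ∈ (Finset.Icc 1 (p ^ e)).erase (p ^ e), Ln (p ^ e) / k :=
    Finset.dvd_sum fun k hk => by
      obtain ⟨hne, hk⟩ := Finset.mem_erase.mp hk
      obtain ⟨hk1, hkn⟩ := Finset.mem_Icc.mp hk
      exact prime_dvd_Ln_div hp hk1 (lt_of_le_of_ne hkn hne)
  rw [← Finset.sum_erase_add _ _ (Finset.mem_Icc.mpr ⟨hpe, le_rfl⟩), ← add_assoc,
    Nat.dvd_add_right (hLn.add hlower)]
  exact not_prime_dvd_Ln_div_self hp e

lemma coeff_F (n j : ℕ) :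
    (F n).coeff j = if j = 0 then 1 else if j ≤ n then (j : ℚ)⁻¹ else 0 := by
  simp only [F, coeff_add, coeff_one, finsetSum_coeff, coeff_C_mul_X_pow]
  rw [Finset.sum_ite_eq]
  split_ifs <;> simp_all

lemma natDegree_F (n : ℕ) : (F n).natDegree = n := by
  refine natDegree_eq_of_le_of_coeff_ne_zero ?_ (by rw [coeff_F]; split_ifs <;> simp_all)
  exact natDegree_le_iff_coeff_eq_zero.mpr fun j hj => by
    rw [coeff_F]; split_ifs <;> first | rfl | (exfalso; omega)

lemma leadingCoeff_F {n : ℕ} (hn : 1 ≤ n) : (F n).leadingCoeff = (n : ℚ)⁻¹ := by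
  rw [leadingCoeff, natDegree_F, coeff_F, if_neg (by omega), if_pos le_rfl]

lemma derivative_F (n : ℕ) : derivative (F n) = ∑ i ∈ Finset.range n, (X : ℚ[X]) ^ i := by
  rw [F, derivative_add, derivative_one, zero_add, derivative_sum,
    ← Finset.Ico_add_one_right_eq_Icc, Finset.sum_Ico_eq_sum_range, Nat.add_sub_cancel]
  refine Finset.sum_congr rfl fun k _ => ?_
  rw [derivative_C_mul_X_pow, Nat.add_sub_cancel_left, inv_mul_cancel₀ (by positivity), C_1,
    one_mul]

lemma F_eq_C_mul_Ftilde (n : ℕ) : F n = C (Ln n : ℚ)⁻¹ * Ftilde n := by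
  rw [Ftilde, ← mul_assoc, ← C_mul, inv_mul_cancel₀ (by exact_mod_cast Ln_ne_zero n), C_1, one_mul]

noncomputable def FtildeInt (n : ℕ) : ℤ[X] :=
  C (Ln n : ℤ) + ∑ k ∈ Finset.Icc 1 n, C ((Ln n / k : ℕ) : ℤ) * X ^ k

lemma map_FtildeInt (n : ℕ) : (FtildeInt n).map (Int.castRingHom ℚ) = Ftilde n := by
  rw [FtildeInt, Ftilde, F, mul_add, mul_one, Finset.mul_sum, Polynomial.map_add,
    Polynomial.map_sum]
  congr 1
  · simp
  refine Finset.sum_congr rfl fun k hk => ?_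
  obtain ⟨hk1, hkn⟩ := Finset.mem_Icc.mp hk
  rw [Polynomial.map_mul, map_C, Polynomial.map_pow, map_X, ← mul_assoc, ← C_mul,
    eq_intCast, Int.cast_natCast, Nat.cast_div (dvd_Ln hk1 hkn) (by positivity), div_eq_mul_inv]

lemma natDegree_FtildeInt_le (n : ℕ) : (FtildeInt n).natDegree ≤ n := by
  refine natDegree_add_le_of_degree_le ((natDegree_C (Ln n : ℤ)).trans_le (Nat.zero_le n)) ?_
  refine natDegree_sum_le_of_forall_le _ _ fun k hk => ?_
  exact natDegree_C_mul_X_pow_le _ _ |>.trans (Finset.mem_Icc.mp hk).2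

lemma eval_one_FtildeInt (n : ℕ) :
    (FtildeInt n).eval 1 = ((Ln n + ∑ k ∈ Finset.Icc 1 n, Ln n / k : ℕ) : ℤ) := by
  simp [FtildeInt, eval_finsetSum]

lemma natDegree_geom_sum_X {R : Type*} [CommRing R] [Nontrivial R] (n : ℕ) :
    (∑ i ∈ Finset.range n, (X : R[X]) ^ i).natDegree = n - 1 := by
  rcases Nat.eq_zero_or_pos n with rfl | hn
  · simp
  have h := (monic_X_sub_C (1 : R)).natDegree_mul (monic_geom_sum_X hn.ne')
  rw [natDegree_X_sub_C, C_1, mul_geom_sum, ← C_1, natDegree_X_pow_sub_C] at h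
  omega

lemma geom_sum_X_eq_X_sub_one_pow {R : Type*} [CommRing R] [IsDomain R] (p : ℕ) [ExpChar R p]
    (e : ℕ) : ∑ i ∈ Finset.range (p ^ e), (X : R[X]) ^ i = (X - 1) ^ (p ^ e - 1) := by
  have hpe : 1 ≤ p ^ e := Nat.one_le_pow _ _ (expChar_pos R p)
  refine mul_left_cancel₀ (by simpa using X_sub_C_ne_zero (1 : R)) ?_
  rw [mul_geom_sum, ← pow_succ', Nat.sub_add_cancel hpe, sub_pow_expChar_pow, one_pow]

lemma resC_eq_resultant (P Q : ℚ[X]) : resC P Q = (P.resultant Q : ℂ) := by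
  have hinj := (algebraMap ℚ ℂ).injective
  rw [resC, ← eq_ratCast (algebraMap ℚ ℂ), ← eq_ratCast (algebraMap ℚ ℂ), ← resultant_map_map,
    ← leadingCoeff_map_of_injective hinj, ← natDegree_map_eq_of_injective hinj P,
    ← natDegree_map_eq_of_injective hinj Q,
    resultant_eq_prod_eval _ _ _ le_rfl (IsAlgClosed.splits _)]

lemma discC_eq_ratCast (P : ℚ[X]) :
    discC P = (((-1) ^ P.natDegree.choose 2 * P.leadingCoeff⁻¹ *
      P.resultant (derivative P) : ℚ) : ℂ) := by
  rw [discC, resC_eq_resultant]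
  push_cast
  rfl

lemma resultant_F_derivative (n : ℕ) :
    (F n).resultant (derivative (F n)) = ((Ln n : ℚ)⁻¹) ^ (n - 1) *
      ((∑ i ∈ Finset.range n, (X : ℤ[X]) ^ i).resultant (FtildeInt n) (n - 1) n : ℤ) := by
  have hgeom : (∑ i ∈ Finset.range n, (X : ℤ[X]) ^ i).map (Int.castRingHom ℚ) =
      ∑ i ∈ Finset.range n, (X : ℚ[X]) ^ i := by
    simp [Polynomial.map_sum]
  rw [resultant_comm, derivative_F, natDegree_F, natDegree_geom_sum_X,
    (Nat.even_mul_pred_self n).neg_one_pow, one_mul, F_eq_C_mul_Ftilde, resultant_C_mul_right,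
    ← map_FtildeInt, ← hgeom, resultant_map_map, eq_intCast]

lemma not_prime_dvd_resultant {p e : ℕ} (hp : p.Prime) (he : 0 < e) :
    ¬ (p : ℤ) ∣ (∑ i ∈ Finset.range (p ^ e), (X : ℤ[X]) ^ i).resultant
      (FtildeInt (p ^ e)) (p ^ e - 1) (p ^ e) := by
  have := Fact.mk hp
  have hgeom : (∑ i ∈ Finset.range (p ^ e), (X : ℤ[X]) ^ i).map (Int.castRingHom (ZMod p)) =
      (X - C 1) ^ (p ^ e - 1) := by
    simp [Polynomial.map_sum, geom_sum_X_eq_X_sub_one_pow]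
  rw [← ZMod.intCast_zmod_eq_zero_iff_dvd, ← eq_intCast (Int.castRingHom (ZMod p)),
    ← resultant_map_map, hgeom,
    resultant_X_sub_C_pow_left _ _ _ _ (natDegree_map_le.trans (natDegree_FtildeInt_le _)),
    eval_one_map, eval_one_FtildeInt, eq_intCast, Int.cast_natCast]
  exact pow_ne_zero _ ((ZMod.natCast_eq_zero_iff _ _).not.mpr (not_prime_dvd_Ln_add_sum_div hp he))

lemma padicValRat_Ln_prime_pow {p : ℕ} [hp : Fact p.Prime] (e : ℕ) :
    padicValRat p (Ln (p ^ e)) = e := by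
  rw [← padicValRat_of_nat, ← Nat.factorization_def _ hp.out, factorization_Ln_prime_pow hp.out]

lemma padicValRat_neg_one_pow_mul (p k : ℕ) (q : ℚ) :
    padicValRat p ((-1) ^ k * q) = padicValRat p q := by
  rcases neg_one_pow_eq_or ℚ k with h | h <;> simp [h, padicValRat.neg]

theorem stmt16_general (p e n : ℕ) (hp : p.Prime) (he : 0 < e) (hn : n = p ^ e) :
    ∃ r : ℚ, (r : ℂ) = discC (F n) ∧
      padicValRat p r = (e : ℤ) - (e : ℤ) * ((n : ℤ) - 1) := by
  have := Fact.mk hp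
  subst hn
  have hpe : 1 ≤ p ^ e := Nat.one_le_pow _ _ hp.pos
  set m := (∑ i ∈ Finset.range (p ^ e), (X : ℤ[X]) ^ i).resultant (FtildeInt (p ^ e))
    (p ^ e - 1) (p ^ e)
  have hm : ¬ (p : ℤ) ∣ m := not_prime_dvd_resultant hp he
  have hm0 : (m : ℚ) ≠ 0 := Int.cast_ne_zero.mpr fun h => hm (h ▸ dvd_zero _)
  have hL : (Ln (p ^ e) : ℚ)⁻¹ ^ (p ^ e - 1) ≠ 0 :=
    pow_ne_zero _ (inv_ne_zero (Nat.cast_ne_zero.mpr (Ln_ne_zero _)))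
  refine ⟨_, (discC_eq_ratCast (F (p ^ e))).symm, ?_⟩
  rw [leadingCoeff_F hpe, inv_inv, resultant_F_derivative, mul_assoc, padicValRat_neg_one_pow_mul,
    padicValRat.mul (by positivity) (mul_ne_zero hL hm0), padicValRat.mul hL hm0,
    padicValRat.pow, padicValRat.inv, padicValRat_Ln_prime_pow,
    padicValRat.of_int, padicValInt.eq_zero_of_not_dvd hm, Nat.cast_pow, padicValRat.pow,
    padicValRat.self hp.one_lt]
  push_cast [hpe]
  ring

/-- If `p ≡ 1 (mod 4)` is prime, `e ≥ 1` and `n = p^e`, then the `p`-adic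
valuation of `disc(F n)` equals `e − e(n−1)`. -/
theorem stmt16 (p e n : ℕ) (hp : p.Prime) (hp4 : p % 4 = 1) (he : 0 < e) (hn : n = p ^ e) :
    ∃ r : ℚ, (r : ℂ) = discC (F n) ∧
      padicValRat p r = (e : ℤ) - (e : ℤ) * ((n : ℤ) - 1) :=
  stmt16_general p e n hp he hn
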